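/- arXiv:0704.1488 — 4 statements merged into one kernel-verified Lean document; each statement's English description precedes it below -/
import Mathlib

section
/- Let B = (B₁, B₂, B₃) : Ω → ℝ³ be a C² vector field depending only on (x,y), and α : Ω → ℝ a nonvanishing C¹ function of (x,y). If curl B + α B = 0, then B₃ satisfies ΔB₃ - ⟨∇α/α, ∇B₃⟩ + α²B₃ = 0, where Δ and ∇ are taken in the variables (x,y). -/
/-! Solve the first two equations for `B₁ = -∂_y B₃ / α` and `B₂ = ∂_x B₃ / α`. Differentiating
`∂_y B₃ + α B₁ = 0` in `y` and `-∂_x B₃ + α B₂ = 0` in `x` and subtracting gives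
`ΔB₃ = α (∂_x B₂ - ∂_y B₁) + B₂ ∂_x α - B₁ ∂_y α`; the third equation turns the first term into
`-α² B₃`, and substituting `B₁`, `B₂` turns the rest into `⟨∇α / α, ∇B₃⟩`. -/

noncomputable def pdx (f : ℝ × ℝ → ℝ) (p : ℝ × ℝ) : ℝ := fderiv ℝ f p (1, 0)
noncomputable def pdy (f : ℝ × ℝ → ℝ) (p : ℝ × ℝ) : ℝ := fderiv ℝ f p (0, 1)

section DirectionalDerivative

variable {𝕜 E F : Type*} [NontriviallyNormedField 𝕜] [NormedAddCommGroup E] [NormedSpace 𝕜 E]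
  [NormedAddCommGroup F] [NormedSpace 𝕜 F]

theorem ContDiffAt.differentiableAt_fderiv_apply {f : E → F} {p : E} (hf : ContDiffAt 𝕜 2 f p)
    (v : E) : DifferentiableAt 𝕜 (fun q => fderiv 𝕜 f q v) p :=
  ((hf.fderiv_right (m := 1) le_rfl).clm_apply contDiffAt_const).differentiableAt one_ne_zero

theorem fderiv_apply_add_mul_eq_zero_of_eqOn {s : Set E} (hs : IsOpen s) {g a b : E → 𝕜}
    (h : ∀ q ∈ s, g q + a q * b q = 0) {p : E} (hp : p ∈ s) (hg : DifferentiableAt 𝕜 g p)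
    (ha : DifferentiableAt 𝕜 a p) (hb : DifferentiableAt 𝕜 b p) (v : E) :
    fderiv 𝕜 g p v + (a p * fderiv 𝕜 b p v + b p * fderiv 𝕜 a p v) = 0 := by
  have hzero : fderiv 𝕜 (fun q => g q + a q * b q) p = 0 := by
    rw [Filter.EventuallyEq.fderiv_eq (f := fun _ => (0 : 𝕜))
      (Filter.eventually_of_mem (hs.mem_nhds hp) h), fderiv_const_apply]
  rw [fderiv_fun_add (g := fun q => a q * b q) hg (ha.mul hb), fderiv_fun_mul ha hb] at hzero
  simpa using congrArg (· v) hzero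

end DirectionalDerivative

theorem stmt1 (Ω : Set (ℝ × ℝ)) (hΩopen : IsOpen Ω)
    (B₁ B₂ B₃ : ℝ × ℝ → ℝ) (α : ℝ × ℝ → ℝ)
    (hB₁ : ContDiffOn ℝ 2 B₁ Ω) (hB₂ : ContDiffOn ℝ 2 B₂ Ω) (hB₃ : ContDiffOn ℝ 2 B₃ Ω)
    (hα : ContDiffOn ℝ 1 α Ω) (hα0 : ∀ p ∈ Ω, α p ≠ 0)
    (heq1 : ∀ p ∈ Ω, pdy B₃ p + α p * B₁ p = 0)
    (heq2 : ∀ p ∈ Ω, -pdx B₃ p + α p * B₂ p = 0)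
    (heq3 : ∀ p ∈ Ω, pdx B₂ p - pdy B₁ p + α p * B₃ p = 0) :
    ∀ p ∈ Ω,
      (pdx (pdx B₃) p + pdy (pdy B₃) p)
        - ((pdx α p / α p) * pdx B₃ p + (pdy α p / α p) * pdy B₃ p)
        + (α p) ^ 2 * B₃ p = 0 := by
  intro p hp
  have hnhds := hΩopen.mem_nhds hp
  have hαd := (hα.contDiffAt hnhds).differentiableAt one_ne_zero
  have hB₁d := (hB₁.contDiffAt hnhds).differentiableAt two_ne_zero
  have hB₂d := (hB₂.contDiffAt hnhds).differentiableAt two_ne_zero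
  have hB₃' := hB₃.contDiffAt hnhds
  have hy : pdy (pdy B₃) p + (α p * pdy B₁ p + B₁ p * pdy α p) = 0 :=
    fderiv_apply_add_mul_eq_zero_of_eqOn hΩopen heq1 hp
      (hB₃'.differentiableAt_fderiv_apply _) hαd hB₁d _
  have hx : -pdx (pdx B₃) p + (α p * pdx B₂ p + B₂ p * pdx α p) = 0 := by
    have := fderiv_apply_add_mul_eq_zero_of_eqOn hΩopen heq2 hp
      (hB₃'.differentiableAt_fderiv_apply _).neg hαd hB₂d (1, 0)
    rwa [fderiv_fun_neg] at this
  field_simp [hα0 p hp]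
  linear_combination α p ^ 2 * heq3 p hp - α p * hx + α p * hy + pdx α p * heq2 p hp
    - pdy α p * heq1 p hp
end

section
/- Let α(y) = 1/√(1-y²) on the open unit disk Ω. Then the vector field B₁(x,y) = (xy, 1-y², x√(1-y²)) satisfies curl B₁ + α B₁ = 0 on Ω. -/
/-- the open unit disk in the (x,y)-plane -/
def unitDisk : Set (ℝ × ℝ) := {p : ℝ × ℝ | p.1 ^ 2 + p.2 ^ 2 < 1}

/-! Each component of `B` is a product `f x * g y`, so its partial derivatives are one-variable
derivatives; the three identities then reduce to `√(1 - y²) ^ 2 = 1 - y²`. -/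

section SeparableProduct

variable {F : ℝ × ℝ → ℝ} {f g : ℝ → ℝ} {f' g' : ℝ} {p : ℝ × ℝ}

theorem hasFDerivAt_of_eq_mul_comp_fst_snd (hF : ∀ q, F q = f q.1 * g q.2)
    (hf : HasDerivAt f f' p.1) (hg : HasDerivAt g g' p.2) :
    HasFDerivAt F (f p.1 • g' • ContinuousLinearMap.snd ℝ ℝ ℝ +
      g p.2 • f' • ContinuousLinearMap.fst ℝ ℝ ℝ) p := by
  rw [funext hF]
  exact (hf.comp_hasFDerivAt p hasFDerivAt_fst).mul (hg.comp_hasFDerivAt p hasFDerivAt_snd)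

theorem pdx_of_eq_mul_comp_fst_snd (hF : ∀ q, F q = f q.1 * g q.2)
    (hf : HasDerivAt f f' p.1) (hg : HasDerivAt g g' p.2) : pdx F p = f' * g p.2 := by
  simp [pdx, (hasFDerivAt_of_eq_mul_comp_fst_snd hF hf hg).fderiv, mul_comm]

theorem pdy_of_eq_mul_comp_fst_snd (hF : ∀ q, F q = f q.1 * g q.2)
    (hf : HasDerivAt f f' p.1) (hg : HasDerivAt g g' p.2) : pdy F p = f p.1 * g' := by
  simp [pdy, (hasFDerivAt_of_eq_mul_comp_fst_snd hF hf hg).fderiv]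

end SeparableProduct

theorem hasDerivAt_sqrt_one_sub_sq {y : ℝ} (hy : y ^ 2 < 1) :
    HasDerivAt (fun t => √(1 - t ^ 2)) (-y / √(1 - y ^ 2)) y := by
  have hpos : 0 < 1 - y ^ 2 := by linarith
  convert (((hasDerivAt_pow 2 y).const_sub 1).sqrt hpos.ne') using 1
  field_simp
  ring

theorem sq_snd_lt_one_of_mem_unitDisk {p : ℝ × ℝ} (hp : p ∈ unitDisk) : p.2 ^ 2 < 1 := by
  have := sq_nonneg p.1
  simp only [unitDisk, Set.mem_ofPred_eq] at hp
  linarith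

theorem stmt7 (α B₁ B₂ B₃ : ℝ × ℝ → ℝ)
    (hα : ∀ p : ℝ × ℝ, α p = 1 / Real.sqrt (1 - p.2 ^ 2))
    (hB₁ : ∀ p : ℝ × ℝ, B₁ p = p.1 * p.2)
    (hB₂ : ∀ p : ℝ × ℝ, B₂ p = 1 - p.2 ^ 2)
    (hB₃ : ∀ p : ℝ × ℝ, B₃ p = p.1 * Real.sqrt (1 - p.2 ^ 2)) :
    ∀ p ∈ unitDisk,
      pdy B₃ p + α p * B₁ p = 0 ∧
      -pdx B₃ p + α p * B₂ p = 0 ∧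
      pdx B₂ p - pdy B₁ p + α p * B₃ p = 0 := by
  rintro ⟨x, y⟩ hp
  have hy : y ^ 2 < 1 := sq_snd_lt_one_of_mem_unitDisk hp
  have hs := hasDerivAt_sqrt_one_sub_sq hy
  have hB₂' : ∀ q : ℝ × ℝ, B₂ q = (fun _ => 1 : ℝ → ℝ) q.1 * (fun t => 1 - t ^ 2) q.2 := by
    simp [hB₂]
  rw [pdy_of_eq_mul_comp_fst_snd (f := id) hB₃ (hasDerivAt_id x) hs,
    pdx_of_eq_mul_comp_fst_snd (f := id) hB₃ (hasDerivAt_id x) hs,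
    pdx_of_eq_mul_comp_fst_snd hB₂' (hasDerivAt_const x 1) ((hasDerivAt_pow 2 y).const_sub 1),
    pdy_of_eq_mul_comp_fst_snd (f := id) (g := id) hB₁ (hasDerivAt_id x) (hasDerivAt_id y),
    hα, hB₁, hB₂, hB₃, id]
  have hsq : √(1 - y ^ 2) ^ 2 = 1 - y ^ 2 := Real.sq_sqrt (by linarith)
  have hne : √(1 - y ^ 2) ≠ 0 := by positivity
  refine ⟨?_, ?_, ?_⟩
  · field_simp
    ring
  · field_simp
    linear_combination -hsq
  · field_simp
    ring
end

section
/- Let p, q, u₀ : Ω → ℝ with Ω ⊂ ℝ² open, p positive C², u₀ a positive C² solution of div(p ∇u₀) + q u₀ = 0, and set f = √p · u₀. If W : Ω → ℂ is a C¹ solution of the Vekua equation ∂_z̄ W = (∂_z̄ f / f) · conj(W), then u = (1/√p) Re W is a solution of div(p ∇u) + qu = 0. -/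
/-- complex-valued partial derivatives and the ∂_z̄ operator -/
noncomputable def pdxC (f : ℝ × ℝ → ℂ) (p : ℝ × ℝ) : ℂ := fderiv ℝ f p (1, 0)
noncomputable def pdyC (f : ℝ × ℝ → ℂ) (p : ℝ × ℝ) : ℂ := fderiv ℝ f p (0, 1)
noncomputable def dzbarC (f : ℝ × ℝ → ℂ) (p : ℝ × ℝ) : ℂ :=
  (1 / 2) * (pdxC f p + Complex.I * pdyC f p)
noncomputable def dzbarR (f : ℝ × ℝ → ℝ) (p : ℝ × ℝ) : ℂ :=
  (1 / 2) * ((pdx f p : ℂ) + Complex.I * (pdy f p : ℂ))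

open Filter Topology

noncomputable section

namespace Vekua

section DirDeriv

variable {F : Type*} [NormedAddCommGroup F] [NormedSpace ℝ F]

def dirDeriv (e : ℝ × ℝ) (f : ℝ × ℝ → F) (p : ℝ × ℝ) : F := fderiv ℝ f p e

theorem dirDeriv_congr {f g : ℝ × ℝ → F} {p : ℝ × ℝ} (e : ℝ × ℝ) (h : f =ᶠ[𝓝 p] g) :
    dirDeriv e f p = dirDeriv e g p := by
  rw [dirDeriv, dirDeriv, h.fderiv_eq]

theorem _root_.ContDiffAt.differentiableAt_dirDeriv {f : ℝ × ℝ → F} {p : ℝ × ℝ}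
    (hf : ContDiffAt ℝ 2 f p) (e : ℝ × ℝ) : DifferentiableAt ℝ (dirDeriv e f) p :=
  ((ContinuousLinearMap.apply ℝ F e).differentiableAt).comp p
    ((hf.fderiv_right (m := 1) le_rfl).differentiableAt one_ne_zero)

theorem dirDeriv_comm {f : ℝ × ℝ → F} {p : ℝ × ℝ} (hf : ContDiffAt ℝ 2 f p) (e₁ e₂ : ℝ × ℝ) :
    dirDeriv e₂ (dirDeriv e₁ f) p = dirDeriv e₁ (dirDeriv e₂ f) p := by
  have hd := (hf.fderiv_right (m := 1) le_rfl).differentiableAt one_ne_zero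
  have h : ∀ a b : ℝ × ℝ, dirDeriv b (dirDeriv a f) p = fderiv ℝ (fderiv ℝ f) p b a := fun a b =>
    congrArg (· b) ((ContinuousLinearMap.apply ℝ F a).hasFDerivAt.comp p hd.hasFDerivAt).fderiv
  rw [h, h, hf.isSymmSndFDerivAt (by simp)]

theorem dirDeriv_sub {a b : ℝ × ℝ → F} {p : ℝ × ℝ} (e : ℝ × ℝ)
    (ha : DifferentiableAt ℝ a p) (hb : DifferentiableAt ℝ b p) :
    dirDeriv e (fun q => a q - b q) p = dirDeriv e a p - dirDeriv e b p := by
  simp [dirDeriv, fderiv_fun_sub ha hb]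

theorem dirDeriv_neg (a : ℝ × ℝ → F) (p e : ℝ × ℝ) :
    dirDeriv e (fun q => -a q) p = -dirDeriv e a p := by
  simp [dirDeriv, fderiv_fun_neg]

end DirDeriv

section ComplexParts

variable {E : Type*} [NormedAddCommGroup E] [NormedSpace ℝ E] {W : E → ℂ} {x : E} {n : WithTop ℕ∞}

theorem _root_.ContDiffAt.complex_re (h : ContDiffAt ℝ n W x) :
    ContDiffAt ℝ n (fun y => (W y).re) x :=
  Complex.reCLM.contDiff.contDiffAt.comp x h

theorem _root_.ContDiffAt.complex_im (h : ContDiffAt ℝ n W x) :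
    ContDiffAt ℝ n (fun y => (W y).im) x :=
  Complex.imCLM.contDiff.contDiffAt.comp x h

end ComplexParts

variable {a b s w : ℝ × ℝ → ℝ} {p : ℝ × ℝ}

theorem dirDeriv_mul (e : ℝ × ℝ) (ha : DifferentiableAt ℝ a p) (hb : DifferentiableAt ℝ b p) :
    dirDeriv e (fun q => a q * b q) p = dirDeriv e a p * b p + a p * dirDeriv e b p := by
  simp only [dirDeriv, fderiv_fun_mul ha hb, add_apply, smul_apply, smul_eq_mul]
  ring

theorem dirDeriv_div (e : ℝ × ℝ) (ha : DifferentiableAt ℝ a p) (hb : DifferentiableAt ℝ b p)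
    (hb0 : b p ≠ 0) :
    dirDeriv e (fun q => a q / b q) p
      = (b p * dirDeriv e a p - a p * dirDeriv e b p) / b p ^ 2 := by
  have hinv : HasFDerivAt (fun q => (b q)⁻¹) ((-(b p ^ 2)⁻¹) • fderiv ℝ b p) p :=
    (hasDerivAt_inv hb0).comp_hasFDerivAt p hb.hasFDerivAt
  simp only [div_eq_mul_inv, dirDeriv_mul e ha hinv.differentiableAt]
  simp only [dirDeriv, hinv.fderiv, smul_apply, smul_eq_mul]
  field_simp
  ring

theorem dirDeriv_re {W : ℝ × ℝ → ℂ} (e : ℝ × ℝ) (hW : DifferentiableAt ℝ W p) :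
    dirDeriv e (fun q => (W q).re) p = (dirDeriv e W p).re :=
  congrArg (· e) (Complex.reCLM.hasFDerivAt.comp p hW.hasFDerivAt).fderiv

theorem dirDeriv_im {W : ℝ × ℝ → ℂ} (e : ℝ × ℝ) (hW : DifferentiableAt ℝ W p) :
    dirDeriv e (fun q => (W q).im) p = (dirDeriv e W p).im :=
  congrArg (· e) (Complex.imCLM.hasFDerivAt.comp p hW.hasFDerivAt).fderiv

theorem dirDeriv_wronskian (e : ℝ × ℝ) (hs : ContDiffAt ℝ 2 s p) (hw : ContDiffAt ℝ 2 w p) :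
    dirDeriv e (fun q => s q * dirDeriv e w q - w q * dirDeriv e s q) p
      = s p * dirDeriv e (dirDeriv e w) p - w p * dirDeriv e (dirDeriv e s) p := by
  have hs₁ := hs.differentiableAt two_ne_zero
  have hw₁ := hw.differentiableAt two_ne_zero
  have hs₂ := hs.differentiableAt_dirDeriv e
  have hw₂ := hw.differentiableAt_dirDeriv e
  rw [dirDeriv_sub e (hs₁.fun_mul hw₂) (hw₁.fun_mul hs₂), dirDeriv_mul e hs₁ hw₂,
    dirDeriv_mul e hw₁ hs₂]
  ring

def divGrad (P u : ℝ × ℝ → ℝ) (p : ℝ × ℝ) : ℝ :=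
  dirDeriv (1, 0) (fun q => P q * dirDeriv (1, 0) u q) p
    + dirDeriv (0, 1) (fun q => P q * dirDeriv (0, 1) u q) p

def laplace (u : ℝ × ℝ → ℝ) (p : ℝ × ℝ) : ℝ :=
  dirDeriv (1, 0) (dirDeriv (1, 0) u) p + dirDeriv (0, 1) (dirDeriv (0, 1) u) p

theorem divGrad_congr {P P' u u' : ℝ × ℝ → ℝ} (hP : P =ᶠ[𝓝 p] P') (hu : u =ᶠ[𝓝 p] u') :
    divGrad P u p = divGrad P' u' p := by
  have hflux : ∀ e : ℝ × ℝ,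
      (fun q => P q * dirDeriv e u q) =ᶠ[𝓝 p] fun q => P' q * dirDeriv e u' q := fun e => by
    filter_upwards [hP, hu.fderiv (𝕜 := ℝ)] with q hPq huq
    simp only [dirDeriv, hPq, huq]
  exact congrArg₂ (· + ·) (dirDeriv_congr _ (hflux _)) (dirDeriv_congr _ (hflux _))

theorem divGrad_sq_div (hs : ContDiffAt ℝ 2 s p) (hw : ContDiffAt ℝ 2 w p) (hs0 : s p ≠ 0) :
    divGrad (fun q => s q ^ 2) (fun q => w q / s q) p = s p * laplace w p - w p * laplace s p := by
  have hflux : ∀ e : ℝ × ℝ, (fun q => s q ^ 2 * dirDeriv e (fun r => w r / s r) q)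
      =ᶠ[𝓝 p] fun q => s q * dirDeriv e w q - w q * dirDeriv e s q := fun e => by
    filter_upwards [hs.eventually (by simp), hw.eventually (by simp),
      hs.continuousAt.eventually_ne hs0] with q hsq hwq hsq0
    rw [dirDeriv_div e (hwq.differentiableAt two_ne_zero) (hsq.differentiableAt two_ne_zero) hsq0]
    field_simp
  rw [divGrad, laplace, laplace, dirDeriv_congr _ (hflux _), dirDeriv_congr _ (hflux _),
    dirDeriv_wronskian _ hs hw, dirDeriv_wronskian _ hs hw]
  ring

theorem wronskian_re_eq_of_vekua {f : ℝ × ℝ → ℝ} {W : ℝ × ℝ → ℂ} (hf : DifferentiableAt ℝ f p)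
    (hW : DifferentiableAt ℝ W p) (h : (f p : ℂ) * dzbarC W p = dzbarR f p * starRingEnd ℂ (W p)) :
    f p * dirDeriv (1, 0) (fun q => (W q).re) p - (W p).re * dirDeriv (1, 0) f p
        = dirDeriv (0, 1) (fun q => f q * (W q).im) p ∧
      f p * dirDeriv (0, 1) (fun q => (W q).re) p - (W p).re * dirDeriv (0, 1) f p
        = -dirDeriv (1, 0) (fun q => f q * (W q).im) p := by
  have hWim : DifferentiableAt ℝ (fun q => (W q).im) p := Complex.imCLM.differentiableAt.comp p hW
  have hre := congrArg Complex.re h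
  have him := congrArg Complex.im h
  simp only [dzbarC, one_div, pdxC, pdyC, Complex.mul_re, Complex.ofReal_re, Complex.inv_re,
    Complex.re_ofNat, Complex.normSq_ofNat, div_self_mul_self', Complex.add_re, Complex.I_re,
    zero_mul, Complex.I_im, one_mul, zero_sub, Complex.inv_im, Complex.im_ofNat, neg_zero, zero_div,
    Complex.add_im, Complex.mul_im, zero_add, sub_zero, Complex.ofReal_im, add_zero, dzbarR, pdx,
    pdy, mul_zero, sub_self, Complex.conj_re, Complex.conj_im, mul_neg, sub_neg_eq_add] at hre him
  rw [dirDeriv_re _ hW, dirDeriv_re _ hW, dirDeriv_mul _ hf hWim, dirDeriv_mul _ hf hWim,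
    dirDeriv_im _ hW, dirDeriv_im _ hW]
  simp only [dirDeriv]
  constructor <;> linarith

theorem mul_laplace_re_of_vekua {f : ℝ × ℝ → ℝ} {W : ℝ × ℝ → ℂ} (hf : ContDiffAt ℝ 2 f p)
    (hW : ContDiffAt ℝ 2 W p)
    (h : ∀ᶠ q in 𝓝 p, (f q : ℂ) * dzbarC W q = dzbarR f q * starRingEnd ℂ (W q)) :
    f p * laplace (fun q => (W q).re) p = laplace f p * (W p).re := by
  have hg : ContDiffAt ℝ 2 (fun q => f q * (W q).im) p := hf.mul hW.complex_im
  have hflux : ∀ᶠ q in 𝓝 p,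
      f q * dirDeriv (1, 0) (fun q => (W q).re) q - (W q).re * dirDeriv (1, 0) f q
          = dirDeriv (0, 1) (fun q => f q * (W q).im) q ∧
        f q * dirDeriv (0, 1) (fun q => (W q).re) q - (W q).re * dirDeriv (0, 1) f q
          = -dirDeriv (1, 0) (fun q => f q * (W q).im) q := by
    filter_upwards [h, hf.eventually (by simp), hW.eventually (by simp)] with q hq hfq hWq
    exact wronskian_re_eq_of_vekua (hfq.differentiableAt two_ne_zero)
      (hWq.differentiableAt two_ne_zero) hq
  have hx := dirDeriv_wronskian (1, 0) hf hW.complex_re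
  have hy := dirDeriv_wronskian (0, 1) hf hW.complex_re
  rw [dirDeriv_congr _ (hflux.mono fun _ => And.left), dirDeriv_comm hg] at hx
  rw [dirDeriv_congr _ (hflux.mono fun _ => And.right), dirDeriv_neg] at hy
  rw [laplace, laplace]
  linarith

end Vekua

end

open Vekua in
theorem stmt14 (Ω : Set (ℝ × ℝ)) (hΩopen : IsOpen Ω)
    (P Q u₀ : ℝ × ℝ → ℝ)
    (hP : ContDiffOn ℝ 2 P Ω) (hPpos : ∀ p ∈ Ω, 0 < P p)
    (hu₀ : ContDiffOn ℝ 2 u₀ Ω) (hu₀pos : ∀ p ∈ Ω, 0 < u₀ p)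
    (hu₀sol : ∀ p ∈ Ω,
      pdx (fun q => P q * pdx u₀ q) p + pdy (fun q => P q * pdy u₀ q) p + Q p * u₀ p = 0)
    (f : ℝ × ℝ → ℝ) (hf : ∀ p : ℝ × ℝ, f p = Real.sqrt (P p) * u₀ p)
    (W : ℝ × ℝ → ℂ) (hW : ContDiffOn ℝ 2 W Ω)
    (hVekua : ∀ p ∈ Ω, dzbarC W p = (dzbarR f p / (f p : ℂ)) * starRingEnd ℂ (W p))
    (u : ℝ × ℝ → ℝ) (hu : ∀ p : ℝ × ℝ, u p = (1 / Real.sqrt (P p)) * (W p).re) :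
    ∀ p ∈ Ω,
      pdx (fun q => P q * pdx u q) p + pdy (fun q => P q * pdy u q) p + Q p * u p = 0 := by
  intro p hp
  set s : ℝ × ℝ → ℝ := fun q => Real.sqrt (P q)
  have hs : ContDiffAt ℝ 2 s p :=
    (Real.contDiffAt_sqrt (hPpos p hp).ne').comp p (hP.contDiffAt (hΩopen.mem_nhds hp))
  have hspos : ∀ q ∈ Ω, 0 < s q := fun q hq => Real.sqrt_pos.mpr (hPpos q hq)
  have hfpos : ∀ q ∈ Ω, 0 < f q := fun q hq => hf q ▸ mul_pos (hspos q hq) (hu₀pos q hq)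
  have hfC : ContDiffAt ℝ 2 f p := by
    rw [show f = fun q => s q * u₀ q from funext hf]
    exact hs.mul (hu₀.contDiffAt (hΩopen.mem_nhds hp))
  have hP_sq : P =ᶠ[𝓝 p] fun q => s q ^ 2 := by
    filter_upwards [hΩopen.mem_nhds hp] with q hq
    exact (Real.sq_sqrt (hPpos q hq).le).symm
  have hu₀_div : u₀ =ᶠ[𝓝 p] fun q => f q / s q := by
    filter_upwards [hΩopen.mem_nhds hp] with q hq
    rw [hf, mul_div_cancel_left₀ _ (hspos q hq).ne']
  have hu_div : u = fun q => (W q).re / s q := funext fun q => by rw [hu, one_div_mul_eq_div]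
  have hsol : s p * laplace f p - f p * laplace s p + Q p * (f p / s p) = 0 := by
    have h := hu₀sol p hp
    change divGrad P u₀ p + Q p * u₀ p = 0 at h
    rwa [divGrad_congr hP_sq hu₀_div, divGrad_sq_div hs hfC (hspos p hp).ne',
      hu₀_div.eq_of_nhds] at h
  have hWC : ContDiffAt ℝ 2 W p := hW.contDiffAt (hΩopen.mem_nhds hp)
  have hlap : f p * laplace (fun q => (W q).re) p = laplace f p * (W p).re := by
    refine mul_laplace_re_of_vekua hfC hWC ?_
    filter_upwards [hΩopen.mem_nhds hp] with q hq
    rw [hVekua q hq, ← mul_assoc, mul_div_cancel₀ _ (by exact_mod_cast (hfpos q hq).ne')]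
  change divGrad P u p + Q p * u p = 0
  rw [divGrad_congr hP_sq EventuallyEq.rfl, hu_div,
    divGrad_sq_div hs hWC.complex_re (hspos p hp).ne']
  have h : f p * (s p * laplace (fun q => (W q).re) p - (W p).re * laplace s p
      + Q p * ((W p).re / s p)) = 0 := by
    linear_combination (W p).re * hsol + s p * hlap
  exact (mul_eq_zero.mp h).resolve_left (hfpos p hp).ne'
end

section
/- Let p, q, u₀ : Ω → ℝ as above with u₀ > 0 solving div(p∇u₀) + qu₀ = 0, f = √p u₀, and let W be a C² solution of ∂_z̄ W = (∂_z̄ f/f) conj(W). Then v = √p · Im W satisfies div((1/p)∇v) + q₁ v = 0, where q₁ = -(1/p)(q/p + 2⟨∇p/p, ∇u₀/u₀⟩ + 2|∇u₀/u₀|²). -/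
section Calculus

variable {E : Type*} [NormedAddCommGroup E] [NormedSpace ℝ E] {f g : E → ℝ} {z : E}

lemma fderiv_fun_mul_apply (hf : DifferentiableAt ℝ f z) (hg : DifferentiableAt ℝ g z) (w : E) :
    fderiv ℝ (fun q => f q * g q) z w = fderiv ℝ f z w * g z + f z * fderiv ℝ g z w := by
  rw [fderiv_fun_mul hf hg]
  simp only [add_apply, smul_apply, smul_eq_mul]
  ring

lemma fderiv_fun_inv_apply (hg : DifferentiableAt ℝ g z) (hg0 : g z ≠ 0) (w : E) :
    fderiv ℝ (fun q => (g q)⁻¹) z w = -fderiv ℝ g z w / g z ^ 2 := by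
  have h : HasFDerivAt (fun q => (g q)⁻¹) ((-(g z ^ 2)⁻¹) • fderiv ℝ g z) z :=
    (hasDerivAt_inv hg0).comp_hasFDerivAt z hg.hasFDerivAt
  rw [h.fderiv, smul_apply, smul_eq_mul]
  ring

lemma differentiableAt_fun_div (hf : DifferentiableAt ℝ f z) (hg : DifferentiableAt ℝ g z)
    (hg0 : g z ≠ 0) : DifferentiableAt ℝ (fun q => f q / g q) z := by
  simpa only [div_eq_mul_inv] using hf.fun_mul (hg.fun_inv hg0)

lemma fderiv_fun_div_apply (hf : DifferentiableAt ℝ f z) (hg : DifferentiableAt ℝ g z)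
    (hg0 : g z ≠ 0) (w : E) :
    fderiv ℝ (fun q => f q / g q) z w =
      (fderiv ℝ f z w * g z - f z * fderiv ℝ g z w) / g z ^ 2 := by
  simp only [div_eq_mul_inv, fderiv_fun_mul_apply hf (hg.fun_inv hg0),
    fderiv_fun_inv_apply hg hg0]
  field_simp
  ring

lemma ContDiffAt.differentiableAt_fderiv_apply_s15 {u : E → ℝ} (hu : ContDiffAt ℝ 2 u z) (w : E) :
    DifferentiableAt ℝ (fun q => fderiv ℝ u q w) z :=
  ((hu.fderiv_right (m := 1) le_rfl).differentiableAt one_ne_zero).clm_apply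
    (differentiableAt_const w)

lemma ContDiffAt.fderiv_fderiv_apply_comm {u : E → ℝ} (hu : ContDiffAt ℝ 2 u z) (v w : E) :
    fderiv ℝ (fun q => fderiv ℝ u q v) z w = fderiv ℝ (fun q => fderiv ℝ u q w) z v := by
  have hd := (hu.fderiv_right (m := 1) le_rfl).differentiableAt one_ne_zero
  rw [fderiv_clm_apply hd (differentiableAt_const v),
    fderiv_clm_apply hd (differentiableAt_const w)]
  simpa using hu.isSymmSndFDerivAt (by simp [minSmoothness_of_isRCLikeNormedField]) w v

end Calculus

lemma cauchyRiemann_of_vekua {W : ℝ × ℝ → ℂ} {F : ℝ × ℝ → ℝ} {z : ℝ × ℝ}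
    (hW : DifferentiableAt ℝ W z) (hF : DifferentiableAt ℝ F z) (hF0 : F z ≠ 0)
    (hVekua : dzbarC W z = (dzbarR F z / (F z : ℂ)) * starRingEnd ℂ (W z)) :
    pdx (fun q => F q * (W q).im) z / F z ^ 2 = -pdy (fun q => (W q).re / F q) z ∧
      pdy (fun q => F q * (W q).im) z / F z ^ 2 = pdx (fun q => (W q).re / F q) z := by
  have hre : HasFDerivAt (fun q => (W q).re) (Complex.reCLM.comp (fderiv ℝ W z)) z :=
    Complex.reCLM.hasFDerivAt.comp z hW.hasFDerivAt
  have him : HasFDerivAt (fun q => (W q).im) (Complex.imCLM.comp (fderiv ℝ W z)) z :=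
    Complex.imCLM.hasFDerivAt.comp z hW.hasFDerivAt
  have hF0' : (F z : ℂ) ≠ 0 := by exact_mod_cast hF0
  have key : dzbarC W z * F z = dzbarR F z * starRingEnd ℂ (W z) := by
    rw [hVekua]; field_simp
  have e1 := congrArg Complex.re key
  have e2 := congrArg Complex.im key
  simp only [dzbarC, dzbarR, pdxC, pdyC, pdx, pdy, one_div, Complex.mul_re, Complex.mul_im,
    Complex.add_re, Complex.add_im, Complex.inv_re, Complex.inv_im, Complex.re_ofNat,
    Complex.im_ofNat, Complex.normSq_ofNat, div_self_mul_self', Complex.I_re, Complex.I_im,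
    Complex.ofReal_re, Complex.ofReal_im, Complex.conj_re, Complex.conj_im, zero_mul, one_mul,
    zero_sub, neg_zero, zero_div, zero_add, sub_zero, add_zero, mul_zero, sub_self, mul_neg,
    sub_neg_eq_add] at e1 e2
  simp only [pdx, pdy, fderiv_fun_mul_apply hF him.differentiableAt,
    fderiv_fun_div_apply hre.differentiableAt hF hF0, hre.fderiv, him.fderiv,
    ContinuousLinearMap.comp_apply, Complex.reCLM_apply, Complex.imCLM_apply]
  constructor
  · field_simp
    linear_combination 2 * e2
  · field_simp
    linear_combination -2 * e1

noncomputable def divWeightedGrad (σ w : ℝ × ℝ → ℝ) (p : ℝ × ℝ) : ℝ :=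
  pdx (fun q => σ q * pdx w q) p + pdy (fun q => σ q * pdy w q) p

lemma divWeightedGrad_eq_zero_of_cauchyRiemann {s : Set (ℝ × ℝ)} (hs : IsOpen s)
    {σ w u : ℝ × ℝ → ℝ} (hu : ContDiffOn ℝ 2 u s) (hx : ∀ z ∈ s, σ z * pdx w z = -pdy u z)
    (hy : ∀ z ∈ s, σ z * pdy w z = pdx u z) {p : ℝ × ℝ} (hp : p ∈ s) :
    divWeightedGrad σ w p = 0 := by
  have hxp := Filter.eventuallyEq_of_mem (hs.mem_nhds hp) fun z hz => hx z hz
  have hyp := Filter.eventuallyEq_of_mem (hs.mem_nhds hp) fun z hz => hy z hz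
  unfold divWeightedGrad
  rw [pdx, pdy, hxp.fderiv_eq, hyp.fderiv_eq, fderiv_fun_neg, neg_apply]
  exact neg_add_eq_zero.mpr ((hu.contDiffAt (hs.mem_nhds hp)).fderiv_fderiv_apply_comm _ _)

lemma mul_divWeightedGrad_div_sq_mul {s : Set (ℝ × ℝ)} (hs : IsOpen s) {p : ℝ × ℝ} (hp : p ∈ s)
    {σ ρ v : ℝ × ℝ → ℝ} (hσ : DifferentiableAt ℝ σ p) (hρ : ContDiffOn ℝ 2 ρ s)
    (hv : ContDiffOn ℝ 2 v s) (hρ0 : ∀ z ∈ s, ρ z ≠ 0) :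
    ρ p * divWeightedGrad (fun q => σ q / ρ q ^ 2) (fun q => ρ q * v q) p =
      divWeightedGrad σ v p + ρ p * divWeightedGrad (fun q => σ q / ρ q ^ 2) ρ p * v p := by
  have hρd : ∀ z ∈ s, DifferentiableAt ℝ ρ z := fun z hz =>
    (hρ.contDiffAt (hs.mem_nhds hz)).differentiableAt two_ne_zero
  have hvd : ∀ z ∈ s, DifferentiableAt ℝ v z := fun z hz =>
    (hv.contDiffAt (hs.mem_nhds hz)).differentiableAt two_ne_zero
  have hρ2 : DifferentiableAt ℝ (fun q => σ q / ρ q ^ 2) p :=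
    differentiableAt_fun_div hσ ((hρd p hp).fun_pow 2) (pow_ne_zero 2 (hρ0 p hp))
  have hsplit (w : ℝ × ℝ) :
      (fun q => σ q / ρ q ^ 2 * fderiv ℝ (fun q => ρ q * v q) q w) =ᶠ[nhds p]
        fun q => (ρ q)⁻¹ * (σ q * fderiv ℝ v q w) + v q * (σ q / ρ q ^ 2 * fderiv ℝ ρ q w) :=
    Filter.eventuallyEq_of_mem (hs.mem_nhds hp) fun z hz => by
      rw [fderiv_fun_mul_apply (hρd z hz) (hvd z hz)]
      field_simp [hρ0 z hz]
      ring
  have hterm (w : ℝ × ℝ) :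
      fderiv ℝ (fun q => σ q / ρ q ^ 2 * fderiv ℝ (fun q => ρ q * v q) q w) p w =
        (ρ p)⁻¹ * fderiv ℝ (fun q => σ q * fderiv ℝ v q w) p w
          + v p * fderiv ℝ (fun q => σ q / ρ q ^ 2 * fderiv ℝ ρ q w) p w := by
    have hσv : DifferentiableAt ℝ (fun q => σ q * fderiv ℝ v q w) p :=
      hσ.mul ((hv.contDiffAt (hs.mem_nhds hp)).differentiableAt_fderiv_apply_s15 w)
    have hσρ : DifferentiableAt ℝ (fun q => σ q / ρ q ^ 2 * fderiv ℝ ρ q w) p :=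
      hρ2.mul ((hρ.contDiffAt (hs.mem_nhds hp)).differentiableAt_fderiv_apply_s15 w)
    rw [(hsplit w).fderiv_eq, fderiv_fun_add (((hρd p hp).fun_inv (hρ0 p hp)).fun_mul hσv)
      ((hvd p hp).fun_mul hσρ), add_apply, fderiv_fun_mul_apply ((hρd p hp).fun_inv (hρ0 p hp)) hσv,
      fderiv_fun_mul_apply (hvd p hp) hσρ, fderiv_fun_inv_apply (hρd p hp) (hρ0 p hp)]
    field_simp [hρ0 p hp]
    ring
  simp only [divWeightedGrad, pdx, pdy, hterm]
  field_simp [hρ0 p hp]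
  ring

lemma mul_divWeightedGrad_one_div_div_sq_self {P Q u₀ : ℝ × ℝ → ℝ} {p : ℝ × ℝ}
    (hP : DifferentiableAt ℝ P p) (hP0 : P p ≠ 0) (hu₀ : ContDiffAt ℝ 2 u₀ p) (hu₀0 : u₀ p ≠ 0)
    (hsol : divWeightedGrad P u₀ p + Q p * u₀ p = 0) :
    u₀ p * divWeightedGrad (fun q => 1 / P q / u₀ q ^ 2) u₀ p =
      -(1 / P p) * (Q p / P p
        + 2 * ((pdx P p * pdx u₀ p + pdy P p * pdy u₀ p) / (P p * u₀ p))
        + 2 * (((pdx u₀ p) ^ 2 + (pdy u₀ p) ^ 2) / (u₀ p) ^ 2)) := by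
  have hu := hu₀.differentiableAt two_ne_zero
  have hP1 : DifferentiableAt ℝ (fun q => 1 / P q) p :=
    differentiableAt_fun_div (differentiableAt_const 1) hP hP0
  have hu2 : DifferentiableAt ℝ (fun q => u₀ q ^ 2) p := hu.fun_pow 2
  have hg : DifferentiableAt ℝ (fun q => 1 / P q / u₀ q ^ 2) p :=
    differentiableAt_fun_div hP1 hu2 (pow_ne_zero 2 hu₀0)
  have hdg (w : ℝ × ℝ) : fderiv ℝ (fun q => 1 / P q / u₀ q ^ 2) p w =
      -(fderiv ℝ P p w * u₀ p + 2 * P p * fderiv ℝ u₀ p w) / (P p ^ 2 * u₀ p ^ 3) := by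
    rw [fderiv_fun_div_apply hP1 hu2 (pow_ne_zero 2 hu₀0),
      fderiv_fun_div_apply (differentiableAt_const 1) hP hP0, fderiv_fun_pow 2 hu]
    simp only [fderiv_fun_const, Pi.zero_apply, zero_apply, smul_apply, smul_eq_mul, nsmul_eq_mul]
    field_simp
    ring
  simp only [divWeightedGrad, pdx, pdy] at hsol ⊢
  rw [fderiv_fun_mul_apply hP (hu₀.differentiableAt_fderiv_apply_s15 _),
    fderiv_fun_mul_apply hP (hu₀.differentiableAt_fderiv_apply_s15 _)] at hsol
  rw [fderiv_fun_mul_apply hg (hu₀.differentiableAt_fderiv_apply_s15 _),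
    fderiv_fun_mul_apply hg (hu₀.differentiableAt_fderiv_apply_s15 _), hdg, hdg]
  field_simp
  linear_combination u₀ p * hsol

theorem stmt15_general (Ω : Set (ℝ × ℝ)) (hΩopen : IsOpen Ω)
    (P Q u₀ : ℝ × ℝ → ℝ)
    (hP : ContDiffOn ℝ 2 P Ω) (hPpos : ∀ p ∈ Ω, 0 < P p)
    (hu₀ : ContDiffOn ℝ 2 u₀ Ω) (hu₀pos : ∀ p ∈ Ω, 0 < u₀ p)
    (hu₀sol : ∀ p ∈ Ω,
      pdx (fun q => P q * pdx u₀ q) p + pdy (fun q => P q * pdy u₀ q) p + Q p * u₀ p = 0)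
    (f : ℝ × ℝ → ℝ) (hf : ∀ p : ℝ × ℝ, f p = Real.sqrt (P p) * u₀ p)
    (W : ℝ × ℝ → ℂ) (hW : ContDiffOn ℝ 2 W Ω)
    (hVekua : ∀ p ∈ Ω, dzbarC W p = (dzbarR f p / (f p : ℂ)) * starRingEnd ℂ (W p))
    (v : ℝ × ℝ → ℝ) (hv : ∀ p : ℝ × ℝ, v p = Real.sqrt (P p) * (W p).im)
    (q₁ : ℝ × ℝ → ℝ)
    (hq₁ : ∀ p ∈ Ω, q₁ p =
      -(1 / P p) * (Q p / P p
        + 2 * ((pdx P p * pdx u₀ p + pdy P p * pdy u₀ p) / (P p * u₀ p))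
        + 2 * (((pdx u₀ p) ^ 2 + (pdy u₀ p) ^ 2) / (u₀ p) ^ 2))) :
    ∀ p ∈ Ω,
      pdx (fun q => (1 / P q) * pdx v q) p + pdy (fun q => (1 / P q) * pdy v q) p
        + q₁ p * v p = 0 := by
  intro p hp
  have hΩ : ∀ z ∈ Ω, Ω ∈ nhds z := fun z hz => hΩopen.mem_nhds hz
  have hP0 : ∀ z ∈ Ω, P z ≠ 0 := fun z hz => (hPpos z hz).ne'
  have hu₀0 : ∀ z ∈ Ω, u₀ z ≠ 0 := fun z hz => (hu₀pos z hz).ne'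
  have hf0 : ∀ z ∈ Ω, f z ≠ 0 := fun z hz => by
    rw [hf]; exact mul_ne_zero (Real.sqrt_pos.2 (hPpos z hz)).ne' (hu₀0 z hz)
  have hf2 : ∀ z ∈ Ω, f z ^ 2 = P z * u₀ z ^ 2 := fun z hz => by
    rw [hf, mul_pow, Real.sq_sqrt (hPpos z hz).le]
  have hfW : (fun q => f q * (W q).im) = fun q => u₀ q * v q := by funext q; rw [hf, hv]; ring
  have hfC : ContDiffOn ℝ 2 f Ω := by simpa only [← funext hf] using (hP.sqrt hP0).mul hu₀
  have him : ContDiffOn ℝ 2 (fun q => (W q).im) Ω := Complex.imCLM.contDiff.comp_contDiffOn hW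
  have hvC : ContDiffOn ℝ 2 v Ω := by simpa only [← funext hv] using (hP.sqrt hP0).mul him
  have hCR (z : ℝ × ℝ) (hz : z ∈ Ω) := cauchyRiemann_of_vekua
    ((hW.contDiffAt (hΩ z hz)).differentiableAt two_ne_zero)
    ((hfC.contDiffAt (hΩ z hz)).differentiableAt two_ne_zero) (hf0 z hz) (hVekua z hz)
  have hdiv : divWeightedGrad (fun q => 1 / P q / u₀ q ^ 2) (fun q => u₀ q * v q) p = 0 :=
    divWeightedGrad_eq_zero_of_cauchyRiemann hΩopen (u := fun q => (W q).re / f q)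
      ((Complex.reCLM.contDiff.comp_contDiffOn hW).div hfC hf0)
      (fun z hz => by rw [← (hCR z hz).1, hfW, hf2 z hz]; ring)
      (fun z hz => by rw [← (hCR z hz).2, hfW, hf2 z hz]; ring) hp
  have hPd := (hP.contDiffAt (hΩ p hp)).differentiableAt two_ne_zero
  have hsubst := mul_divWeightedGrad_div_sq_mul hΩopen hp
    (differentiableAt_fun_div (differentiableAt_const 1) hPd (hP0 p hp)) hu₀ hvC hu₀0
  rw [hdiv, mul_zero] at hsubst
  rw [hq₁ p hp, ← mul_divWeightedGrad_one_div_div_sq_self hPd (hP0 p hp)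
    (hu₀.contDiffAt (hΩ p hp)) (hu₀0 p hp) (hu₀sol p hp)]
  exact hsubst.symm

theorem stmt15 (Ω : Set (ℝ × ℝ)) (hΩopen : IsOpen Ω)
    (P Q u₀ : ℝ × ℝ → ℝ)
    (hP : ContDiffOn ℝ 2 P Ω) (hPpos : ∀ p ∈ Ω, 0 < P p)
    (hQ : ContinuousOn Q Ω)
    (hu₀ : ContDiffOn ℝ 2 u₀ Ω) (hu₀pos : ∀ p ∈ Ω, 0 < u₀ p)
    (hu₀sol : ∀ p ∈ Ω,
      pdx (fun q => P q * pdx u₀ q) p + pdy (fun q => P q * pdy u₀ q) p + Q p * u₀ p = 0)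
    (f : ℝ × ℝ → ℝ) (hf : ∀ p : ℝ × ℝ, f p = Real.sqrt (P p) * u₀ p)
    (W : ℝ × ℝ → ℂ) (hW : ContDiffOn ℝ 2 W Ω)
    (hVekua : ∀ p ∈ Ω, dzbarC W p = (dzbarR f p / (f p : ℂ)) * starRingEnd ℂ (W p))
    (v : ℝ × ℝ → ℝ) (hv : ∀ p : ℝ × ℝ, v p = Real.sqrt (P p) * (W p).im)
    (q₁ : ℝ × ℝ → ℝ)
    (hq₁ : ∀ p ∈ Ω, q₁ p =
      -(1 / P p) * (Q p / P p
        + 2 * ((pdx P p * pdx u₀ p + pdy P p * pdy u₀ p) / (P p * u₀ p))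
        + 2 * (((pdx u₀ p) ^ 2 + (pdy u₀ p) ^ 2) / (u₀ p) ^ 2))) :
    ∀ p ∈ Ω,
      pdx (fun q => (1 / P q) * pdx v q) p + pdy (fun q => (1 / P q) * pdy v q) p
        + q₁ p * v p = 0 :=
  stmt15_general Ω hΩopen P Q u₀ hP hPpos hu₀ hu₀pos hu₀sol f hf W hW hVekua v hv q₁ hq₁
end
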